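/- Impossibility of the shift encoding in the original λF type system: for every trail type μα and expression type α of λF, the relation compatible μα (α ⇒⟨•⟩ α) μα does not hold. -/
import Mathlib


namespace LambdaF

/-! ## Syntax and operational semantics of λF -/

/-- λF expressions.  A constant `const ι n` is the `n`-th constant of base type `ι`. -/
inductive Tm : Type where
  | const : Nat → Nat → Tm
  | var : String → Tm
  | lam : String → Tm → Tm
  | app : Tm → Tm → Tm
  | control : String → Tm → Tm
  | prompt : Tm → Tm

/-- Values `v ::= c | x | λx.e`. -/
inductive IsVal : Tm → Prop where
  | const (ι n : Nat) : IsVal (.const ι n)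
  | var (x : String) : IsVal (.var x)
  | lam (x : String) (e : Tm) : IsVal (.lam x e)

/-- Substitution `e[x := v]`. -/
def subst : Tm → String → Tm → Tm
  | .const ι n, _, _ => .const ι n
  | .var y, x, v => if y = x then v else .var y
  | .lam y e, x, v => if y = x then .lam y e else .lam y (subst e x v)
  | .app e₁ e₂, x, v => .app (subst e₁ x v) (subst e₂ x v)
  | .control k e, x, v => if k = x then .control k e else .control k (subst e x v)
  | .prompt e, x, v => .prompt (subst e x v)

/-- All variable names occurring in a term (free or bound). -/
def Tm.vars : Tm → List String
  | .const _ _ => []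
  | .var y => [y]
  | .lam y e => y :: e.vars
  | .app e₁ e₂ => e₁.vars ++ e₂.vars
  | .control k e => k :: e.vars
  | .prompt e => e.vars

/-- Pure evaluation contexts `F ::= [] | F e | v F`. -/
inductive PCtx : Type where
  | hole : PCtx
  | appL : PCtx → Tm → PCtx
  | appR : Tm → PCtx → PCtx

/-- Plugging an expression into a pure context. -/
def PCtx.plug : PCtx → Tm → Tm
  | .hole, e => e
  | .appL P e₂, e => .app (P.plug e) e₂
  | .appR v P, e => .app v (P.plug e)

/-- Well-formedness of pure contexts: in `v F`, `v` is a value. -/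
inductive PCtx.Wf : PCtx → Prop where
  | hole : PCtx.Wf .hole
  | appL (P : PCtx) (e : Tm) : PCtx.Wf P → PCtx.Wf (.appL P e)
  | appR (v : Tm) (P : PCtx) : IsVal v → PCtx.Wf P → PCtx.Wf (.appR v P)

/-- All variable names occurring in a pure context. -/
def PCtx.vars : PCtx → List String
  | .hole => []
  | .appL P e => P.vars ++ e.vars
  | .appR v P => v.vars ++ P.vars

/-- General evaluation contexts `E ::= [] | E e | v E | ⟨E⟩`. -/
inductive ECtx : Type where
  | hole : ECtx
  | appL : ECtx → Tm → ECtx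
  | appR : Tm → ECtx → ECtx
  | prompt : ECtx → ECtx

/-- Plugging an expression into a general context. -/
def ECtx.plug : ECtx → Tm → Tm
  | .hole, e => e
  | .appL E e₂, e => .app (E.plug e) e₂
  | .appR v E, e => .app v (E.plug e)
  | .prompt E, e => .prompt (E.plug e)

/-- Well-formedness of general contexts: in `v E`, `v` is a value. -/
inductive ECtx.Wf : ECtx → Prop where
  | hole : ECtx.Wf .hole
  | appL (E : ECtx) (e : Tm) : ECtx.Wf E → ECtx.Wf (.appL E e)
  | appR (v : Tm) (E : ECtx) : IsVal v → ECtx.Wf E → ECtx.Wf (.appR v E)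
  | prompt (E : ECtx) : ECtx.Wf E → ECtx.Wf (.prompt E)

/-- Reduction of λF. -/
inductive Step : Tm → Tm → Prop where
  | beta (E : ECtx) (x : String) (e v : Tm) :
      E.Wf → IsVal v →
      Step (E.plug (.app (.lam x e) v)) (E.plug (subst e x v))
  | control (E : ECtx) (P : PCtx) (k : String) (e : Tm) (x : String) :
      E.Wf → P.Wf → x ∉ P.vars →
      Step (E.plug (.prompt (P.plug (.control k e))))
           (E.plug (.prompt (subst e k (.lam x (P.plug (.var x))))))
  | prompt (E : ECtx) (v : Tm) :
      E.Wf → IsVal v →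
      Step (E.plug (.prompt v)) (E.plug v)

/-- Reflexive transitive closure of reduction. -/
def Steps : Tm → Tm → Prop := Relation.ReflTransGen Step

/-! ## Types and the (original) type system of λF -/

mutual
/-- λF expression types `τ ::= ι | (τ₁ → τ₂ @ μα α μβ β)`. -/
inductive Ty : Type where
  | base : Nat → Ty
  | arrow : Ty → Ty → Tr → Ty → Tr → Ty → Ty

/-- λF trail types `μ ::= • | (τ ⇒⟨μ⟩ τ′)`. -/
inductive Tr : Type where
  | empty : Tr
  | cons : Ty → Tr → Ty → Tr
end

/-- `id-cont-type τ μ τ′`. -/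
def IdContType : Ty → Tr → Ty → Prop
  | τ, .empty, τ' => τ = τ'
  | τ, .cons τ₁ μ₁ τ₁', τ' => τ = τ₁ ∧ τ' = τ₁' ∧ μ₁ = .empty

/-- `compatible μ₁ μ₂ μ₃`. -/
inductive Compatible : Tr → Tr → Tr → Prop where
  | empty (μ : Tr) : Compatible .empty μ μ
  | consEmpty (τ₁ : Ty) (μ₁ : Tr) (τ₁' : Ty) :
      Compatible (.cons τ₁ μ₁ τ₁') .empty (.cons τ₁ μ₁ τ₁')
  | consCons (τ₁ : Ty) (μ₁ : Tr) (τ₁' : Ty) (μ₂ μ₃ : Tr) :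
      Compatible μ₂ μ₃ μ₁ →
      Compatible (.cons τ₁ μ₁ τ₁') μ₂ (.cons τ₁ μ₃ τ₁')

/-- Typing contexts. -/
abbrev Ctx := List (String × Ty)

/-- Context lookup (with shadowing). -/
inductive Lookup : Ctx → String → Ty → Prop where
  | here (Γ : Ctx) (x : String) (τ : Ty) : Lookup ((x, τ) :: Γ) x τ
  | there (Γ : Ctx) (x y : String) (τ τ' : Ty) :
      x ≠ y → Lookup Γ x τ → Lookup ((y, τ') :: Γ) x τ

/-- The typing judgment `Γ ⊢ e : τ @ μα α / μβ β` of λF. -/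
inductive HasType : Ctx → Tm → Ty → Tr → Ty → Tr → Ty → Prop where
  | const (Γ : Ctx) (ι n : Nat) (μα : Tr) (α : Ty) :
      HasType Γ (.const ι n) (.base ι) μα α μα α
  | var (Γ : Ctx) (x : String) (τ : Ty) (μα : Tr) (α : Ty) :
      Lookup Γ x τ →
      HasType Γ (.var x) τ μα α μα α
  | abs (Γ : Ctx) (x : String) (e : Tm) (τ₁ τ₂ : Ty) (μα : Tr) (α : Ty)
      (μβ : Tr) (β : Ty) (μγ : Tr) (γ : Ty) :
      HasType ((x, τ₁) :: Γ) e τ₂ μα α μβ β →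
      HasType Γ (.lam x e) (.arrow τ₁ τ₂ μα α μβ β) μγ γ μγ γ
  | app (Γ : Ctx) (e₁ e₂ : Tm) (τ₁ τ₂ : Ty) (μα : Tr) (α : Ty) (μβ : Tr) (β : Ty)
      (μγ : Tr) (γ : Ty) (μδ : Tr) (δ : Ty) :
      HasType Γ e₁ (.arrow τ₁ τ₂ μα α μβ β) μγ γ μδ δ →
      HasType Γ e₂ τ₁ μβ β μγ γ →
      HasType Γ (.app e₁ e₂) τ₂ μα α μδ δ
  | control (Γ : Ctx) (k : String) (e : Tm) (τ τ₁ : Ty) (μ₁ : Tr) (τ₁' : Ty)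
      (μ₂ μ₀ : Tr) (α β γ : Ty) (μi : Tr) (γ' : Ty) (μα μβ : Tr) :
      HasType ((k, .arrow τ τ₁ μ₁ τ₁' μ₂ α) :: Γ) e γ μi γ' .empty β →
      IdContType γ μi γ' →
      Compatible (.cons τ₁ μ₁ τ₁') μ₂ μ₀ →
      Compatible μβ μ₀ μα →
      HasType Γ (.control k e) τ μα α μβ β
  | prompt (Γ : Ctx) (e : Tm) (τ β' : Ty) (μi : Tr) (β'' : Ty) (μα : Tr) (α : Ty) :
      HasType Γ e β' μi β'' .empty τ →
      IdContType β' μi β'' →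
      HasType Γ (.prompt e) τ μα α μα α

lemma not_compatible_cons_empty (a : Ty) (b : Tr) (c : Ty) (x : Tr) :
    ¬ Compatible (.cons a b c) x .empty := by
  intro h; cases h

lemma not_compatible_cons_fix (α : Ty) (μ : Tr) :
    ¬ Compatible (.cons α .empty α) μ μ := by
  intro h
  cases h with
  | consCons _ _ _ _ _ h' => exact not_compatible_cons_empty _ _ _ _ h'

/-- **Impossibility of the shift encoding in the original λF type system**:
    for every trail type `μα` and expression type `α`, the relation
    `compatible μα (α ⇒⟨•⟩ α) μα` does not hold. -/
theorem shift_encoding_impossible (μα : Tr) (α : Ty) :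
    ¬ Compatible μα (.cons α .empty α) μα := by
  intro h
  cases h with
  | consCons _ _ _ _ _ h' => exact not_compatible_cons_fix _ _ h'

end LambdaF
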